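/- Let d ≥ 1 and t > 0. Define the scale matrix 𝕋_t as the 2d×2d block-diagonal matrix diag(t^{-1/2}·I, t^{-3/2}·I), the quadratic form Q_t(z) = z* K_t⁻¹ z where K_t⁻¹ = [[2t⁻¹·I, -3t⁻²·I],[-3t⁻²·I, 6t⁻³·I]]. Then for all z ∈ ℝ^{2d}, (4-√13)·|𝕋_t z|² ≤ Q_t(z) ≤ (4+√13)·|𝕋_t z|². -/

import Mathlib

open Matrix

/-- The inverse covariance matrix `K_t⁻¹` of the Kolmogorov diffusion. -/
noncomputable def KmatInv (d : ℕ) (t : ℝ) : Matrix (Fin d ⊕ Fin d) (Fin d ⊕ Fin d) ℝ :=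
  Matrix.fromBlocks ((2 * t⁻¹) • 1) ((-(3 * t⁻¹ ^ 2)) • 1) ((-(3 * t⁻¹ ^ 2)) • 1)
    ((6 * t⁻¹ ^ 3) • 1)

/-- `|𝕋_t z|²` where `𝕋_t = diag(t^{-1/2} I_d, t^{-3/2} I_d)`. -/
noncomputable def TnormSq (d : ℕ) (t : ℝ) (z : Fin d ⊕ Fin d → ℝ) : ℝ :=
  (∑ i : Fin d, (z (Sum.inl i)) ^ 2) / t + (∑ i : Fin d, (z (Sum.inr i)) ^ 2) / t ^ 3

lemma quadform_eq (d : ℕ) (t : ℝ) (ht : 0 < t) (z : Fin d ⊕ Fin d → ℝ) :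
    z ⬝ᵥ (KmatInv d t).mulVec z =
      (∑ i : Fin d, (2 * (z (Sum.inl i))^2 * t^2 - 6 * (z (Sum.inl i) * z (Sum.inr i)) * t
        + 6 * (z (Sum.inr i))^2)) / t^3 := by
  have ht' : t ≠ 0 := ht.ne'
  simp only [KmatInv, dotProduct, Matrix.mulVec, Fintype.sum_sum_type, Matrix.fromBlocks,
    Matrix.of_apply, Sum.elim_inl, Sum.elim_inr, Matrix.smul_apply, Matrix.one_apply,
    smul_eq_mul, mul_ite, ite_mul, zero_mul, mul_one, mul_zero, Finset.sum_ite_eq,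
    Finset.sum_ite_eq', Finset.mem_univ, if_true]
  rw [← Finset.sum_add_distrib, Finset.sum_div]
  apply Finset.sum_congr rfl
  intro i _
  field_simp
  ring

lemma Tnorm_eq (d : ℕ) (t : ℝ) (ht : 0 < t) (z : Fin d ⊕ Fin d → ℝ) :
    TnormSq d t z = (∑ i : Fin d, ((z (Sum.inl i))^2 * t^2 + (z (Sum.inr i))^2)) / t^3 := by
  have ht' : t ≠ 0 := ht.ne'
  have h : (∑ i : Fin d, ((z (Sum.inl i))^2 * t^2 + (z (Sum.inr i))^2))
      = (∑ i : Fin d, (z (Sum.inl i))^2) * t^2 + ∑ i : Fin d, (z (Sum.inr i))^2 := by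
    rw [Finset.sum_add_distrib, Finset.sum_mul]
  rw [TnormSq, h]
  field_simp

theorem stmt_2 (d : ℕ) (hd : 1 ≤ d) (t : ℝ) (ht : 0 < t) (z : Fin d ⊕ Fin d → ℝ) :
    (4 - Real.sqrt 13) * TnormSq d t z ≤ z ⬝ᵥ (KmatInv d t).mulVec z ∧
    z ⬝ᵥ (KmatInv d t).mulVec z ≤ (4 + Real.sqrt 13) * TnormSq d t z := by
  set s := Real.sqrt 13 with hs_def
  have hs : s ^ 2 = 13 := Real.sq_sqrt (by norm_num)
  have hs0 : 0 ≤ s := Real.sqrt_nonneg 13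
  have hs3 : 3 ≤ s := by nlinarith
  have ht3 : (0:ℝ) < t ^ 3 := by positivity
  rw [quadform_eq d t ht z, Tnorm_eq d t ht z, ← mul_div_assoc, ← mul_div_assoc,
    div_le_div_iff_of_pos_right ht3, div_le_div_iff_of_pos_right ht3,
    Finset.mul_sum, Finset.mul_sum]
  constructor
  · apply Finset.sum_le_sum
    intro i _
    nlinarith [sq_nonneg (3 * z (Sum.inl i) * t - (s + 2) * z (Sum.inr i)),
      sq_nonneg (z (Sum.inl i) * t)]
  · apply Finset.sum_le_sum
    intro i _
    nlinarith [sq_nonneg (3 * z (Sum.inl i) * t + (s - 2) * z (Sum.inr i)),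
      sq_nonneg (z (Sum.inl i) * t)]
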